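/- arXiv:gr-qc/0401013 — 9 statements merged into one kernel-verified Lean document; each statement's English description precedes it below -/
import Mathlib

section
/- Let Ψ and S be symmetric real m×m matrices with Ψ ≠ 0 satisfying the cyclic relation S_{kj}Ψ_{mi} - S_{km}Ψ_{ji} + S_{im}Ψ_{jk} - S_{ij}Ψ_{mk} = 0 for all indices, and Ψ·S = S·Ψ = ((tr S)/2)·Ψ. Then S·S = ((tr S)/2)·S. -/
open Matrix

theorem stmt_4 {m : ℕ} (Ψ S : Matrix (Fin m) (Fin m) ℝ)
    (hΨsymm : Ψ.IsSymm) (hSsymm : S.IsSymm) (hΨne : Ψ ≠ 0)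
    (h : ∀ i j k l, S k j * Ψ l i - S k l * Ψ j i + S i l * Ψ j k - S i j * Ψ l k = 0)
    (h1 : Ψ * S = ((Matrix.trace S) / 2) • Ψ)
    (h2 : S * Ψ = ((Matrix.trace S) / 2) • Ψ) :
    S * S = ((Matrix.trace S) / 2) • S := by
  set s : ℝ := Matrix.trace S / 2 with hs
  have hSe : ∀ i j, S i j = S j i := fun i j => by
    conv_lhs => rw [← hSsymm]
    rfl
  have hΨe : ∀ i j, Ψ i j = Ψ j i := fun i j => by
    conv_lhs => rw [← hΨsymm]
    rfl
  have hΨS : ∀ i j, ∑ k, Ψ i k * S k j = s * Ψ i j := fun i j => by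
    have := congrFun (congrFun h1 i) j
    simpa [Matrix.mul_apply, smul_eq_mul] using this
  -- X entries
  set X : Fin m → Fin m → ℝ := fun i j => (S * S) i j - s * S i j with hX
  have hSS : ∀ i j, (S * S) i j = ∑ k, S i k * S k j := fun i j => by
    rw [Matrix.mul_apply]
  -- step A : contract the cyclic identity with S
  have keyA : ∀ j k mm p,
      s * S k j * Ψ mm p - s * S k mm * Ψ j p
        + Ψ j k * (S * S) mm p - Ψ mm k * (S * S) j p = 0 := by
    intro j k mm p
    have hz : (0 : ℝ) =
        ∑ i, (S k j * Ψ mm i - S k mm * Ψ j i + S i mm * Ψ j k - S i j * Ψ mm k) * S i p :=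
      (Finset.sum_eq_zero fun i _ => by rw [h i j k mm]; ring).symm
    have hsplit : ∑ i, (S k j * Ψ mm i - S k mm * Ψ j i + S i mm * Ψ j k - S i j * Ψ mm k) * S i p
        = S k j * (∑ i, Ψ mm i * S i p) - S k mm * (∑ i, Ψ j i * S i p)
          + Ψ j k * (∑ i, S mm i * S i p) - Ψ mm k * (∑ i, S j i * S i p) := by
      rw [Finset.mul_sum, Finset.mul_sum, Finset.mul_sum, Finset.mul_sum,
        ← Finset.sum_sub_distrib, ← Finset.sum_add_distrib, ← Finset.sum_sub_distrib]
      refine Finset.sum_congr rfl fun i _ => ?_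
      rw [hSe mm i, hSe j i]
      ring
    rw [hsplit, hΨS mm p, hΨS j p, ← hSS mm p, ← hSS j p] at hz
    linarith [hz]
  -- key identity : Ψ j k * X mm p = Ψ mm k * X j p
  have K : ∀ j k mm p, Ψ j k * X mm p = Ψ mm k * X j p := by
    intro j k mm p
    have hA := keyA j k mm p
    have hB := h p j k mm
    simp only [hX]
    have e1 : S p mm = S mm p := hSe p mm
    have e2 : S p j = S j p := hSe p j
    linear_combination hA - s * hB + s * Ψ j k * e1 - s * Ψ mm k * e2
  -- X is symmetric
  have hXsymm : ∀ i j, X i j = X j i := by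
    intro i j
    have hSSsymm : (S * S)ᵀ = S * S := by
      rw [Matrix.transpose_mul, hSsymm]
    have : (S * S) i j = (S * S) j i := by
      conv_lhs => rw [← hSSsymm]
      rfl
    simp only [hX, this, hSe i j]
  -- Ψ * X = 0 entrywise
  have hΨX : ∀ k p, ∑ i, Ψ k i * X i p = 0 := by
    intro k p
    have hΨSS : ∀ i j, ∑ k, Ψ i k * (S * S) k j = s * (s * Ψ i j) := by
      intro i j
      have : Ψ * (S * S) = s • (s • Ψ) := by
        rw [← Matrix.mul_assoc, h1, Matrix.smul_mul, h1]
      have e := congrFun (congrFun this i) j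
      simpa [Matrix.mul_apply, smul_eq_mul] using e
    have : ∑ i, Ψ k i * X i p
        = (∑ i, Ψ k i * (S * S) i p) - s * ∑ i, Ψ k i * S i p := by
      rw [Finset.mul_sum, ← Finset.sum_sub_distrib]
      refine Finset.sum_congr rfl fun i _ => ?_
      simp only [hX]; ring
    rw [this, hΨSS k p, hΨS k p]
    ring
  -- pick a nonzero entry of Ψ
  obtain ⟨a, b, hab⟩ : ∃ a b, Ψ a b ≠ 0 := by
    by_contra hc
    push_neg at hc
    exact hΨne (by ext i j; exact hc i j)
  -- X a a = 0
  have hXaa : X a a = 0 := by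
    have h0 : ∑ i, Ψ b i * X i a = 0 := hΨX b a
    have hterm : ∀ i, Ψ a b * (Ψ b i * X i a) = Ψ b i * Ψ b i * X a a := by
      intro i
      have := K a b i a  -- Ψ a b * X i a = Ψ i b * X a a
      have e : Ψ i b = Ψ b i := hΨe i b
      linear_combination Ψ b i * this + Ψ b i * X a a * e
    have h0' : Ψ a b * ∑ i, Ψ b i * X i a = (∑ i, Ψ b i * Ψ b i) * X a a := by
      rw [Finset.mul_sum, Finset.sum_mul]
      exact Finset.sum_congr rfl fun i _ => hterm i
    rw [h0, mul_zero] at h0'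
    have hpos : 0 < ∑ i, Ψ b i * Ψ b i := by
      have hba : Ψ b a ≠ 0 := by rw [hΨe b a]; exact hab
      exact Finset.sum_pos' (fun i _ => mul_self_nonneg _)
        ⟨a, Finset.mem_univ a, mul_self_pos.mpr hba⟩
    exact (mul_eq_zero.mp h0'.symm).resolve_left hpos.ne'
  -- conclude X = 0
  ext i j
  show (S * S) i j = (s • S) i j
  rw [Matrix.smul_apply, smul_eq_mul]
  have hXij : X i j = 0 := by
    have k1 := K a b i j  -- Ψ a b * X i j = Ψ i b * X a j
    have k2 := K a b j a  -- Ψ a b * X j a = Ψ j b * X a a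
    have k3 : X a j = X j a := hXsymm a j
    have hne2 : Ψ a b * Ψ a b ≠ 0 := mul_ne_zero hab hab
    have : Ψ a b * Ψ a b * X i j = Ψ i b * Ψ j b * X a a := by
      calc Ψ a b * Ψ a b * X i j = Ψ a b * (Ψ i b * X a j) := by rw [mul_assoc, k1]
        _ = Ψ i b * (Ψ a b * X j a) := by rw [k3]; ring
        _ = Ψ i b * Ψ j b * X a a := by rw [k2]; ring
    rw [hXaa, mul_zero] at this
    exact (mul_eq_zero.mp this).resolve_left hne2
  have := hXij
  simp only [hX] at this
  linarith
end

section
/- Let S be a symmetric real m×m matrix and A an antisymmetric real m×m matrix, with s := (tr S)/2 ≠ 0, satisfying S·A = A·S = s·A and s·A·A = −a·S where a := (1/2)Σ_{ij}A_{ij}². Suppose A ≠ 0. Then for any vector ξ: S ξ = 0 if and only if A ξ = 0. -/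
open Matrix

theorem stmt_7 {m : ℕ} (S A : Matrix (Fin m) (Fin m) ℝ)
    (hSsymm : S.IsSymm) (hAanti : Aᵀ = -A)
    (s : ℝ) (hs : s = (Matrix.trace S) / 2) (hsne : s ≠ 0)
    (a : ℝ) (ha : a = (1/2) * ∑ i, ∑ j, (A i j)^2)
    (h1 : S * A = s • A) (h2 : A * S = s • A)
    (h3 : s • (A * A) = (-a) • S)
    (hAne : A ≠ 0) :
    ∀ ξ : Fin m → ℝ, S.mulVec ξ = 0 ↔ A.mulVec ξ = 0 := by
  have hane : a ≠ 0 := by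
    obtain ⟨i, j, hij⟩ : ∃ i j, A i j ≠ 0 := by
      by_contra h
      push_neg at h
      exact hAne (by ext i j; exact h i j)
    have hpos : 0 < ∑ i, ∑ j, (A i j)^2 := by
      have h1 : ∀ k ∈ Finset.univ, 0 ≤ ∑ j, (A k j)^2 := by
        intro k _; positivity
      refine Finset.sum_pos' h1 ⟨i, Finset.mem_univ i, ?_⟩
      have h2 : ∀ k ∈ Finset.univ, 0 ≤ (A i k)^2 := by
        intro k _; positivity
      exact Finset.sum_pos' h2 ⟨j, Finset.mem_univ j, by positivity⟩
    rw [ha]; positivity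
  intro ξ
  constructor
  · intro hS
    have := congrArg (fun M => M.mulVec ξ) h2
    simp only [← Matrix.mulVec_mulVec, hS, Matrix.mulVec_zero,
      Matrix.smul_mulVec] at this
    rcases smul_eq_zero.mp this.symm with h | h
    · exact absurd h hsne
    · exact h
  · intro hA
    have := congrArg (fun M => M.mulVec ξ) h3
    simp only [Matrix.smul_mulVec, ← Matrix.mulVec_mulVec, hA,
      Matrix.mulVec_zero, smul_zero] at this
    rcases smul_eq_zero.mp this.symm with h | h
    · exact absurd (neg_eq_zero.mp h) hane
    · exact h
end

section
/- Let Ψ and S be symmetric real m×m matrices with s := (tr S)/2 ≠ 0 and p := tr(Ψ·Ψ) satisfying Ψ·S = s·Ψ and 2s·Ψ·Ψ = p·S. Then for any vector ξ: S ξ = 0 if and only if Ψ ξ = 0, provided p ≠ 0. -/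
open Matrix

theorem stmt_8 {m : ℕ} (Ψ S : Matrix (Fin m) (Fin m) ℝ)
    (hΨsymm : Ψ.IsSymm) (hSsymm : S.IsSymm)
    (s : ℝ) (hs : s = (Matrix.trace S) / 2) (hsne : s ≠ 0)
    (p : ℝ) (hp : p = Matrix.trace (Ψ * Ψ)) (hpne : p ≠ 0)
    (h1 : Ψ * S = s • Ψ)
    (h2 : (2 * s) • (Ψ * Ψ) = p • S) :
    ∀ ξ : Fin m → ℝ, S.mulVec ξ = 0 ↔ Ψ.mulVec ξ = 0 := by
  intro ξ
  constructor
  · intro hS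
    -- from h2: (2s) Ψ²ξ = p Sξ = 0, so Ψ²ξ = 0
    have hps : ((2 * s) • (Ψ * Ψ)).mulVec ξ = (p • S).mulVec ξ := by rw [h2]
    rw [smul_mulVec, smul_mulVec, hS, smul_zero] at hps
    have h2s : (2 : ℝ) * s ≠ 0 := by positivity
    have hΨ2 : (Ψ * Ψ).mulVec ξ = 0 := by
      have := smul_eq_zero.mp hps
      tauto
    -- then ‖Ψξ‖² = ξ ⬝ Ψ²ξ = 0
    have key : Ψ.mulVec ξ ⬝ᵥ Ψ.mulVec ξ = ξ ⬝ᵥ (Ψ * Ψ).mulVec ξ := by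
      rw [← mulVec_mulVec, dotProduct_mulVec, ← mulVec_transpose, hΨsymm.eq, mulVec_mulVec]
      exact dotProduct_comm _ _
    rw [hΨ2, dotProduct_zero] at key
    exact dotProduct_self_eq_zero.mp key
  · intro hΨ
    have hps : ((2 * s) • (Ψ * Ψ)).mulVec ξ = (p • S).mulVec ξ := by rw [h2]
    rw [smul_mulVec, smul_mulVec, ← mulVec_mulVec, hΨ, mulVec_zero,
      smul_zero] at hps
    have := smul_eq_zero.mp hps.symm
    tauto
end

section
/- Let Ψ and S be symmetric real m×m matrices with s := (tr S)/2 ≠ 0, p := tr(Ψ·Ψ) ≠ 0, satisfying Ψ·S = S·Ψ = s·Ψ, 2s·Ψ·Ψ = p·S, and S·S = s·S. Then every eigenvector of Ψ is an eigenvector of S, and every nonzero eigenvalue λ of Ψ satisfies λ² = p/2. -/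
open Matrix

/-! If `Ψ ξ = λ ξ`, then `2s Ψ² = p S` makes `ξ` an eigenvector of `S` with eigenvalue `2sλ²/p`.
When `λ ≠ 0`, `ξ = λ⁻¹ Ψ ξ` lies in the range of `Ψ`, on which `S Ψ = s Ψ` says that `S` acts as `s`;
comparing the two eigenvalues gives `2sλ² = sp`. -/

namespace Matrix

variable {n R : Type*} [Fintype n]

theorem mul_self_mulVec_of_mulVec_eq_smul [CommSemiring R] {A : Matrix n n R} {v : n → R} {c : R}
    (hv : A *ᵥ v = c • v) : (A * A) *ᵥ v = c ^ 2 • v := by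
  rw [← mulVec_mulVec, hv, mulVec_smul, hv, smul_smul, sq]

variable {K : Type*} [Field K]

theorem mulVec_eq_smul_of_smul_mul_self_eq_smul {A S : Matrix n n K} {v : n → K} {a b c : K}
    (h : a • (A * A) = b • S) (hb : b ≠ 0) (hv : A *ᵥ v = c • v) :
    S *ᵥ v = (a * c ^ 2 / b) • v := by
  have hbS : b • (S *ᵥ v) = b • ((a * c ^ 2 / b) • v) := by
    rw [← smul_mulVec, ← h, smul_mulVec, mul_self_mulVec_of_mulVec_eq_smul hv, smul_smul,
      smul_smul, mul_div_cancel₀ _ hb]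
  exact smul_right_injective _ hb hbS

theorem mulVec_eq_smul_of_mul_eq_smul {A S : Matrix n n K} {v : n → K} {s c : K}
    (hSA : S * A = s • A) (hv : A *ᵥ v = c • v) (hc : c ≠ 0) : S *ᵥ v = s • v := by
  have hcS : c • (S *ᵥ v) = c • (s • v) := by
    rw [← mulVec_smul, ← hv, mulVec_mulVec, hSA, smul_mulVec, hv, smul_comm]
  exact smul_right_injective _ hc hcS

end Matrix

theorem stmt_9_general {m : ℕ} (Ψ S : Matrix (Fin m) (Fin m) ℝ)
    (s : ℝ) (hsne : s ≠ 0)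
    (p : ℝ) (hpne : p ≠ 0)
    (h1' : S * Ψ = s • Ψ)
    (h2 : (2 * s) • (Ψ * Ψ) = p • S) :
    ∀ (lam : ℝ) (ξ : Fin m → ℝ), ξ ≠ 0 → Ψ.mulVec ξ = lam • ξ →
      (∃ μ : ℝ, S.mulVec ξ = μ • ξ) ∧ (lam ≠ 0 → lam ^ 2 = p / 2) := by
  intro lam ξ hξ hΨξ
  have hSξ := mulVec_eq_smul_of_smul_mul_self_eq_smul h2 hpne hΨξ
  refine ⟨⟨_, hSξ⟩, fun hlam => ?_⟩
  have hμ : 2 * s * lam ^ 2 / p = s :=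
    smul_left_injective ℝ hξ (hSξ.symm.trans (mulVec_eq_smul_of_mul_eq_smul h1' hΨξ hlam))
  field_simp at hμ
  linarith

theorem stmt_9 {m : ℕ} (Ψ S : Matrix (Fin m) (Fin m) ℝ)
    (hΨsymm : Ψ.IsSymm) (hSsymm : S.IsSymm)
    (s : ℝ) (hs : s = (Matrix.trace S) / 2) (hsne : s ≠ 0)
    (p : ℝ) (hp : p = Matrix.trace (Ψ * Ψ)) (hpne : p ≠ 0)
    (h1 : Ψ * S = s • Ψ) (h1' : S * Ψ = s • Ψ)
    (h2 : (2 * s) • (Ψ * Ψ) = p • S)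
    (h3 : S * S = s • S) :
    ∀ (lam : ℝ) (ξ : Fin m → ℝ), ξ ≠ 0 → Ψ.mulVec ξ = lam • ξ →
      (∃ μ : ℝ, S.mulVec ξ = μ • ξ) ∧ (lam ≠ 0 → lam ^ 2 = p / 2) :=
  stmt_9_general Ψ S s hsne p hpne h1' h2
end

section
/- Let v, w be orthonormal vectors in ℝ^m, p > 0, s ≠ 0, a ≠ 0 real numbers. Define Ψ_{ij} = √(p/2)(v_i v_j − w_i w_j), S_{ij} = s(v_i v_j + w_i w_j), A_{ij} = a(w_i v_j − v_i w_j). Then Ψ, S, A satisfy: (i) the cyclic equation Ψ_{ik}A_{jm} + Ψ_{ij}A_{mk} + Ψ_{im}A_{kj} = 0 for all i,j,k,m; and (ii) S_{kj}Ψ_{mi} − S_{km}Ψ_{ji} + S_{im}Ψ_{jk} − S_{ij}Ψ_{mk} = 0 for all i,j,k,m. -/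
open Matrix

theorem stmt_11 {m : ℕ} (v w : Fin m → ℝ)
    (hv : v ⬝ᵥ v = 1) (hw : w ⬝ᵥ w = 1) (hvw : v ⬝ᵥ w = 0)
    (p s a : ℝ) (hp : 0 < p) (hs : s ≠ 0) (ha : a ≠ 0)
    (Ψ S A : Matrix (Fin m) (Fin m) ℝ)
    (hΨ : ∀ i j, Ψ i j = Real.sqrt (p / 2) * (v i * v j - w i * w j))
    (hS : ∀ i j, S i j = s * (v i * v j + w i * w j))
    (hA : ∀ i j, A i j = a * (w i * v j - v i * w j)) :
    (∀ i j k l, Ψ i k * A j l + Ψ i j * A l k + Ψ i l * A k j = 0) ∧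
    (∀ i j k l, S k j * Ψ l i - S k l * Ψ j i + S i l * Ψ j k - S i j * Ψ l k = 0) := by
  constructor <;> intro i j k l <;> simp only [hΨ, hS, hA] <;> ring
end

section
/- Let Ψ be a nonzero symmetric real m×m matrix and Y a real m×m matrix such that Ψ_{ij}Y_{mp} = Ψ_{im}Y_{jp} for all i,j,m,p and Ψ_{ij}Y_{ip} = 0 for all j,p. Then Y = 0. -/
open Matrix

theorem stmt_12 {m : ℕ} (Ψ Y : Matrix (Fin m) (Fin m) ℝ)
    (hΨsymm : Ψ.IsSymm) (hΨne : Ψ ≠ 0)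
    (h1 : ∀ i j k p, Ψ i j * Y k p = Ψ i k * Y j p)
    (h2 : ∀ j p, ∑ i, Ψ i j * Y i p = 0) :
    Y = 0 := by
  obtain ⟨i, j, hij⟩ : ∃ i j, Ψ i j ≠ 0 := by
    by_contra h
    push_neg at h
    exact hΨne (by ext a b; simpa using h a b)
  ext k p
  have key : Ψ i j * ∑ n, Y n p * Y n p = 0 := by
    rw [Finset.mul_sum]
    calc ∑ n, Ψ i j * (Y n p * Y n p)
        = ∑ n, (Ψ i n * Y j p) * Y n p := by
          apply Finset.sum_congr rfl
          intro n _
          rw [← mul_assoc, h1 i j n p]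
      _ = Y j p * ∑ n, Ψ n i * Y n p := by
          rw [Finset.mul_sum]
          apply Finset.sum_congr rfl
          intro n _
          have : Ψ i n = Ψ n i := by
            have := congrFun (congrFun hΨsymm.eq n) i
            simpa [Matrix.transpose_apply] using this
          rw [this]; ring
      _ = 0 := by rw [h2 i p, mul_zero]
  have hsum : ∑ n, Y n p * Y n p = 0 := by
    rcases mul_eq_zero.mp key with h | h
    · exact absurd h hij
    · exact h
  have := Finset.sum_eq_zero_iff_of_nonneg (fun n _ => mul_self_nonneg (Y n p)) |>.mp hsum k (Finset.mem_univ k)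
  simpa using mul_self_eq_zero.mp this
end

section
/- Let Ψ be symmetric and A antisymmetric real m×m matrices, with s a nonzero scalar and a := (1/2)Σ A_{ij}² > 0, satisfying the cyclic relation Ψ_{ik}A_{jm} + Ψ_{ij}A_{mk} + Ψ_{im}A_{kj} = 0 for all indices, ΨA + AΨ = 0, and ΨS = sΨ, SA = sA for a symmetric matrix S with 2s = tr S. Then Ψ·B = −a·Ψ, where B = A·A. -/
open Matrix

theorem stmt_14 {m : ℕ} (Ψ S A : Matrix (Fin m) (Fin m) ℝ)
    (hΨsymm : Ψ.IsSymm) (hSsymm : S.IsSymm) (hAanti : Aᵀ = -A)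
    (s : ℝ) (hsne : s ≠ 0) (hs : 2 * s = Matrix.trace S)
    (a : ℝ) (ha : a = (1/2) * ∑ i, ∑ j, (A i j)^2) (hapos : 0 < a)
    (hcyc : ∀ i j k l, Ψ i k * A j l + Ψ i j * A l k + Ψ i l * A k j = 0)
    (hanti : Ψ * A + A * Ψ = 0)
    (h1 : Ψ * S = s • Ψ) (h2 : S * A = s • A) :
    Ψ * (A * A) = (-a) • Ψ := by
  have hB : (A * A)ᵀ = A * A := by
    rw [Matrix.transpose_mul, hAanti]; simp
  ext i k
  have key : ∑ j, ∑ l, (Ψ i k * A j l + Ψ i j * A l k + Ψ i l * A k j) * A j l = 0 := by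
    simp [hcyc]
  have e : ∀ j l : Fin m, (Ψ i k * A j l + Ψ i j * A l k + Ψ i l * A k j) * A j l
      = Ψ i k * (A j l * A j l) + Ψ i j * (A j l * A l k) + Ψ i l * (A k j * A j l) := by
    intro j l; ring
  simp_rw [e, Finset.sum_add_distrib] at key
  have t1 : ∑ j, ∑ l, Ψ i k * (A j l * A j l) = 2 * a * Ψ i k := by
    simp only [← Finset.mul_sum]
    have : ∑ j, ∑ l, A j l * A j l = 2 * a := by
      rw [ha]; simp_rw [sq]; ring
    rw [this]; ring
  have t2 : ∑ j, ∑ l, Ψ i j * (A j l * A l k) = (Ψ * (A * A)) i k := by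
    simp [Matrix.mul_apply, Finset.mul_sum, mul_assoc]
  have t3 : ∑ j, ∑ l, Ψ i l * (A k j * A j l) = (Ψ * (A * A)) i k := by
    rw [Finset.sum_comm]
    have : ∀ l, ∑ j, Ψ i l * (A k j * A j l) = Ψ i l * (A * A) l k := by
      intro l
      rw [← Finset.mul_sum, ← Matrix.mul_apply]
      congr 1
      have := congrFun (congrFun hB l) k
      simpa [Matrix.transpose_apply] using this
    simp_rw [this, Matrix.mul_apply]
  rw [t1, t2, t3] at key
  have : (Ψ * (A * A)) i k = -a * Ψ i k := by linarith
  simpa using this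
end

section
/- Let λ₁, λ₂, λ₃ be nonzero real numbers with L := λ₁ + λ₂ + λ₃, satisfying λ_A² + λ_B² − λ_Aλ_B − L²/4 = 0 for all pairs A ≠ B from {1,2,3}. Then no such λ₁, λ₂, λ₃ exist. More generally, if nonzero reals λ₁,…,λ_n (n ≥ 3) with L = Σλ_A satisfy λ_A² + λ_B² − λ_Aλ_B = L²/4 for all A ≠ B, this leads to a contradiction; while for n = 2 the only solution is λ₁ = λ₂ = L/2. -/
open Matrix

/- Subtracting the equations for the pairs (A, B) and (A, C) gives (λ_B - λ_C)(λ_B + λ_C - λ_A) = 0.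
With a third index available, the branch λ_B + λ_C = λ_A cannot hold for every labelling of a triple
of nonzero numbers, so all λ_A are equal to some x ≠ 0; then x² = (n x)²/4 forces n = 2. For n = 2 the
single equation reads 3(λ₁ - λ₂)²/4 = 0. -/

theorem eq_of_sq_add_sq_sub_mul_eq {a b c k : ℝ} (ha : a ≠ 0) (hb : b ≠ 0) (hc : c ≠ 0)
    (hab : a ^ 2 + b ^ 2 - a * b = k) (hac : a ^ 2 + c ^ 2 - a * c = k)
    (hbc : b ^ 2 + c ^ 2 - b * c = k) : a = b := by
  have hb_c : (b - c) * (b + c - a) = 0 := by linear_combination hab - hac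
  have ha_c : (a - c) * (a + c - b) = 0 := by linear_combination hab - hbc
  rcases mul_eq_zero.mp hb_c with hb_eq_c | _
  · have : a * (a - b) = 0 := by linear_combination hab - hbc - c * hb_eq_c
    exact sub_eq_zero.mp ((mul_eq_zero.mp this).resolve_left ha)
  · rcases mul_eq_zero.mp ha_c with _ | _
    · exact absurd (by linarith : b = 0) hb
    · exact absurd (by linarith : c = 0) hc

theorem eq_of_forall_ne_sq_add_sq_sub_mul_eq {ι : Type*} [Fintype ι]
    (hι : 3 ≤ Fintype.card ι) {lam : ι → ℝ} (hne : ∀ A, lam A ≠ 0) {k : ℝ}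
    (heq : ∀ A B, A ≠ B → lam A ^ 2 + lam B ^ 2 - lam A * lam B = k) (A B : ι) :
    lam A = lam B := by
  rcases eq_or_ne A B with rfl | hAB
  · rfl
  obtain ⟨C, hCA, hCB⟩ :=
    ENat.exists_ne_ne_of_three_le (by simpa [ENat.card_eq_coe_fintype_card] using hι) A B
  exact eq_of_sq_add_sq_sub_mul_eq (hne A) (hne B) (hne C) (heq A B hAB) (heq A C hCA.symm)
    (heq B C hCB.symm)

theorem card_eq_two_of_sq_eq_sum_sq_div_four {ι : Type*} [Fintype ι] {lam : ι → ℝ} {x : ℝ}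
    (hx : x ≠ 0) (hconst : ∀ C, lam C = x) (heq : x ^ 2 = (∑ C, lam C) ^ 2 / 4) :
    Fintype.card ι = 2 := by
  have hsum : ∑ C, lam C = Fintype.card ι * x := by simp [hconst]
  rw [hsum] at heq
  have hcard : ((Fintype.card ι : ℝ) - 2) * ((Fintype.card ι : ℝ) + 2) = 0 := by
    have hsq : x ^ 2 * ((Fintype.card ι : ℝ) ^ 2 - 4) = 0 := by linear_combination -4 * heq
    linear_combination (mul_eq_zero.mp hsq).resolve_left (pow_ne_zero 2 hx)
  have hpos : (0 : ℝ) < Fintype.card ι + 2 := by positivity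
  exact_mod_cast sub_eq_zero.mp ((mul_eq_zero.mp hcard).resolve_right hpos.ne')

theorem eq_of_sq_add_sq_sub_mul_sub_add_sq_div_four_eq_zero {a b : ℝ}
    (h : a ^ 2 + b ^ 2 - a * b - (a + b) ^ 2 / 4 = 0) : a = b := by
  have : (a - b) ^ 2 = 0 := by linear_combination 4 / 3 * h
  exact sub_eq_zero.mp (pow_eq_zero_iff two_ne_zero |>.mp this)

theorem stmt_15 :
    (∀ (n : ℕ), 3 ≤ n → ∀ lam : Fin n → ℝ,
      (∀ A, lam A ≠ 0) →
      (∀ A B, A ≠ B →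
        lam A ^ 2 + lam B ^ 2 - lam A * lam B - (∑ C, lam C) ^ 2 / 4 = 0) →
      False) ∧
    (∀ lam : Fin 2 → ℝ,
      (∀ A, lam A ≠ 0) →
      (∀ A B, A ≠ B →
        lam A ^ 2 + lam B ^ 2 - lam A * lam B - (∑ C, lam C) ^ 2 / 4 = 0) →
      lam 0 = (∑ C, lam C) / 2 ∧ lam 1 = (∑ C, lam C) / 2) := by
  refine ⟨fun n hn lam hne heq => ?_, fun lam _ heq => ?_⟩
  · set x := lam ⟨0, by omega⟩
    have hconst : ∀ C, lam C = x := fun C =>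
      eq_of_forall_ne_sq_add_sq_sub_mul_eq (by simpa using hn) hne
        (fun A B hAB => sub_eq_zero.mp (heq A B hAB)) C _
    have h01 : (⟨0, by omega⟩ : Fin n) ≠ ⟨1, by omega⟩ := by simp
    have hx : x ^ 2 = (∑ C, lam C) ^ 2 / 4 := by
      have h := heq _ _ h01
      rw [hconst ⟨1, by omega⟩] at h
      linear_combination h
    have h2 := card_eq_two_of_sq_eq_sum_sq_div_four (hne _) hconst hx
    rw [Fintype.card_fin] at h2
    omega
  · rw [Fin.sum_univ_two] at heq ⊢
    have h01 := eq_of_sq_add_sq_sub_mul_sub_add_sq_div_four_eq_zero (heq 0 1 (by decide))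
    constructor <;> linarith
end

section
/- Let S, A be real m×m matrices with S symmetric, A antisymmetric, s := (tr S)/2, a := (1/2)Σ A_{ij}², satisfying S² = sS, SA = AS = sA, and sA² = −aS. Then s·(S+A)(S+A)ᵀ = s·(S+A)ᵀ(S+A) = (s² + a)·S. -/
open Matrix

theorem stmt_18 {m : ℕ} (S A : Matrix (Fin m) (Fin m) ℝ)
    (hSsymm : S.IsSymm) (hAanti : Aᵀ = -A)
    (s : ℝ) (hs : s = (Matrix.trace S) / 2)
    (a : ℝ) (ha : a = (1/2) * ∑ i, ∑ j, (A i j)^2)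
    (h1 : S * S = s • S)
    (h2 : S * A = s • A) (h2' : A * S = s • A)
    (h3 : s • (A * A) = (-a) • S) :
    s • ((S + A) * (S + A)ᵀ) = (s ^ 2 + a) • S ∧
    s • ((S + A)ᵀ * (S + A)) = (s ^ 2 + a) • S := by
  have hT : (S + A)ᵀ = S - A := by
    rw [transpose_add, hSsymm.eq, hAanti, sub_eq_add_neg]
  constructor
  · rw [hT, mul_sub, add_mul, add_mul, h1, h2, h2', smul_sub, smul_add, smul_add, h3]
    module
  · rw [hT, sub_mul, mul_add, mul_add, h1, h2, h2', smul_sub, smul_add, smul_add, h3]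
    module
end
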